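/- Let m > 1, set ω = 2m/(m-1), and let a, b, c > 0 satisfy ab ≤ c(m-1)^2/(8m(m+1)). Then the function V(x) = (a - b|x|^2)_+^{ω} on ℝ^N satisfies, at every point x with a - b|x|^2 > 0, the pointwise inequality -ΔV(x) + c·V(x)^{1/m} ≥ 0. -/

import Mathlib

/-!
On the open set where `f = a - b‖x‖²` is positive, `V = f ^ ω` is smooth and its second directional
derivative along a unit vector `v` is `-2bω (f^(ω-1) - 2b(ω-1) f^(ω-2) ⟪v, x⟫²)`. Summing over an
orthonormal basis and writing `b‖x‖² = a - f` gives
`-ΔV = 2bω(N + 2(ω-1)) f^(ω-1) - 4abω(ω-1) f^(ω-2)`, while `V^(1/m) = f^(ω-2)` because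
`ω/m = ω - 2`. The first term is nonnegative, and the hypothesis on `ab` is exactly
`4abω(ω-1) ≤ c`, since `ω(ω-1) = 2m(m+1)/(m-1)²`.
-/

open Real RealInnerProductSpace

section Profile

variable {E : Type*} [NormedAddCommGroup E] (a b ω : ℝ)

theorem eventually_pos_const_sub_mul_norm_sq {x : E} (hx : 0 < a - b * ‖x‖ ^ 2) :
    ∀ᶠ y in nhds x, 0 < a - b * ‖y‖ ^ 2 :=
  ((continuous_const.sub (continuous_const.mul (continuous_norm.pow 2))).tendsto x)
    |>.eventually_const_lt hx

variable [InnerProductSpace ℝ E]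

theorem hasFDerivAt_const_sub_mul_norm_sq (y : E) :
    HasFDerivAt (fun z : E => a - b * ‖z‖ ^ 2) ((-(2 * b)) • innerSL ℝ y) y := by
  refine (((hasStrictFDerivAt_norm_sq y).hasFDerivAt.const_mul b).const_sub a).congr_fderiv ?_
  ext v
  simp only [neg_apply, smul_apply, smul_eq_mul]
  ring

theorem fderiv_max_rpow_apply {y : E} (hy : 0 < a - b * ‖y‖ ^ 2) (v : E) :
    fderiv ℝ (fun z : E => max (a - b * ‖z‖ ^ 2) 0 ^ ω) y v
      = -(2 * b) * ω * ((a - b * ‖y‖ ^ 2) ^ (ω - 1) * ⟪v, y⟫) := by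
  have hV : HasFDerivAt (fun z : E => (a - b * ‖z‖ ^ 2) ^ ω)
      ((ω * (a - b * ‖y‖ ^ 2) ^ (ω - 1)) • (-(2 * b)) • innerSL ℝ y) y :=
    (hasFDerivAt_const_sub_mul_norm_sq a b y).rpow_const (Or.inl hy.ne')
  have hmax : (fun z : E => max (a - b * ‖z‖ ^ 2) 0 ^ ω) =ᶠ[nhds y]
      fun z => (a - b * ‖z‖ ^ 2) ^ ω := by
    filter_upwards [eventually_pos_const_sub_mul_norm_sq a b hy] with z hz
    rw [max_eq_left hz.le]
  rw [hmax.fderiv_eq, hV.fderiv]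
  simp only [smul_apply, innerSL_apply_apply, smul_eq_mul, real_inner_comm]
  ring

theorem fderiv_fderiv_max_rpow_apply {x : E} (hx : 0 < a - b * ‖x‖ ^ 2) (v : E) :
    fderiv ℝ (fun y : E => fderiv ℝ (fun z : E => max (a - b * ‖z‖ ^ 2) 0 ^ ω) y v) x v
      = -(2 * b) * ω * ((a - b * ‖x‖ ^ 2) ^ (ω - 1) * ‖v‖ ^ 2
          - 2 * b * (ω - 1) * (a - b * ‖x‖ ^ 2) ^ (ω - 2) * ⟪v, x⟫ ^ 2) := by
  have hfirst : (fun y : E => fderiv ℝ (fun z : E => max (a - b * ‖z‖ ^ 2) 0 ^ ω) y v)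
      =ᶠ[nhds x] fun y => -(2 * b) * ω * ((a - b * ‖y‖ ^ 2) ^ (ω - 1) * innerSL ℝ v y) := by
    filter_upwards [eventually_pos_const_sub_mul_norm_sq a b hx] with y hy
    rw [fderiv_max_rpow_apply a b ω hy, innerSL_apply_apply]
  have hpow : HasFDerivAt (fun y : E => (a - b * ‖y‖ ^ 2) ^ (ω - 1))
      (((ω - 1) * (a - b * ‖x‖ ^ 2) ^ (ω - 1 - 1)) • (-(2 * b)) • innerSL ℝ x) x :=
    (hasFDerivAt_const_sub_mul_norm_sq a b x).rpow_const (Or.inl hx.ne')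
  have hsecond : HasFDerivAt
      (fun y : E => -(2 * b) * ω * ((a - b * ‖y‖ ^ 2) ^ (ω - 1) * innerSL ℝ v y)) _ x :=
    (hpow.mul (innerSL ℝ v).hasFDerivAt).const_mul _
  rw [hfirst.fderiv_eq, hsecond.fderiv]
  simp only [smul_apply, add_apply, innerSL_apply_apply, smul_eq_mul,
    real_inner_self_eq_norm_sq, real_inner_comm x v, sub_sub, one_add_one_eq_two]
  ring

end Profile

theorem sum_fderiv_fderiv_max_rpow {ι E : Type*} [Fintype ι] [NormedAddCommGroup E]
    [InnerProductSpace ℝ E] (e : OrthonormalBasis ι ℝ E) (a b ω : ℝ) {x : E}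
    (hx : 0 < a - b * ‖x‖ ^ 2) :
    ∑ i, fderiv ℝ (fun y : E => fderiv ℝ (fun z : E => max (a - b * ‖z‖ ^ 2) 0 ^ ω) y (e i)) x
        (e i)
      = -(2 * b) * ω * (Fintype.card ι + 2 * (ω - 1)) * (a - b * ‖x‖ ^ 2) ^ (ω - 1)
        + 4 * a * b * ω * (ω - 1) * (a - b * ‖x‖ ^ 2) ^ (ω - 2) := by
  simp only [fderiv_fderiv_max_rpow_apply a b ω hx, e.orthonormal.1, one_pow, mul_one]
  rw [← Finset.mul_sum, Finset.sum_sub_distrib, ← Finset.mul_sum, e.sum_sq_inner_right]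
  have hsplit : (a - b * ‖x‖ ^ 2) ^ (ω - 1) = (a - b * ‖x‖ ^ 2) ^ (ω - 2) * (a - b * ‖x‖ ^ 2) := by
    rw [← rpow_add_one hx.ne']; ring_nf
  rw [hsplit]
  simp only [Finset.sum_const, Finset.card_univ, nsmul_eq_mul]
  ring

section Exponent

variable {m ω : ℝ} (hm : 1 < m) (hω : ω = 2 * m / (m - 1))
include hm hω

theorem one_lt_of_eq_two_mul_div_sub_one : 1 < ω := by
  rw [hω, one_lt_div (by linarith)]
  linarith

theorem rpow_rpow_one_div_of_eq_two_mul_div_sub_one {t : ℝ} (ht : 0 ≤ t) :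
    (t ^ ω) ^ (1 / m) = t ^ (ω - 2) := by
  have hm1 : m - 1 ≠ 0 := by linarith
  rw [← rpow_mul ht, hω]
  congr 1
  field_simp
  ring

theorem four_mul_mul_mul_sub_one_le {a b c : ℝ}
    (hab : a * b ≤ c * (m - 1) ^ 2 / (8 * m * (m + 1))) : 4 * a * b * (ω * (ω - 1)) ≤ c := by
  have hm1 : 0 < m - 1 := by linarith
  have hωω : ω * (ω - 1) = 2 * m * (m + 1) / (m - 1) ^ 2 := by
    rw [hω]
    field_simp
    ring
  rw [le_div_iff₀ (by positivity)] at hab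
  rw [hωω, ← mul_div_assoc, div_le_iff₀ (by positivity)]
  linarith

end Exponent

theorem stmt_5_general (N : ℕ) (m a b c : ℝ) (hm : 1 < m)
    (hb : 0 < b)
    (hab : a * b ≤ c * (m - 1) ^ 2 / (8 * m * (m + 1))) :
    ∀ x : EuclideanSpace ℝ (Fin N), 0 < a - b * ‖x‖ ^ 2 →
      -(∑ i : Fin N,
          fderiv ℝ (fun y : EuclideanSpace ℝ (Fin N) =>
              fderiv ℝ (fun z : EuclideanSpace ℝ (Fin N) =>
                  max (a - b * ‖z‖ ^ 2) 0 ^ (2 * m / (m - 1))) y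
                (EuclideanSpace.single i 1)) x (EuclideanSpace.single i 1))
        + c * (max (a - b * ‖x‖ ^ 2) 0 ^ (2 * m / (m - 1))) ^ (1 / m) ≥ 0 := by
  intro x hx
  set ω := 2 * m / (m - 1) with hω
  have hΔ := sum_fderiv_fderiv_max_rpow (EuclideanSpace.basisFun (Fin N) ℝ) a b ω hx
  simp only [EuclideanSpace.basisFun_apply, Fintype.card_fin] at hΔ
  rw [hΔ, max_eq_left hx.le, rpow_rpow_one_div_of_eq_two_mul_div_sub_one hm hω hx.le]
  have hω1 := one_lt_of_eq_two_mul_div_sub_one hm hω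
  have hcoeff := four_mul_mul_mul_sub_one_le hm hω hab
  have hpos₁ : 0 ≤ 2 * b * ω * (N + 2 * (ω - 1)) * (a - b * ‖x‖ ^ 2) ^ (ω - 1) := by
    have : 0 ≤ ω - 1 := by linarith
    positivity
  have hpos₂ : 0 ≤ (c - 4 * a * b * ω * (ω - 1)) * (a - b * ‖x‖ ^ 2) ^ (ω - 2) :=
    mul_nonneg (by linarith) (rpow_nonneg hx.le _)
  linarith

theorem stmt_5 (N : ℕ) (hN : 1 ≤ N) (m a b c : ℝ) (hm : 1 < m)
    (ha : 0 < a) (hb : 0 < b) (hc : 0 < c)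
    (hab : a * b ≤ c * (m - 1) ^ 2 / (8 * m * (m + 1))) :
    ∀ x : EuclideanSpace ℝ (Fin N), 0 < a - b * ‖x‖ ^ 2 →
      -(∑ i : Fin N,
          fderiv ℝ (fun y : EuclideanSpace ℝ (Fin N) =>
              fderiv ℝ (fun z : EuclideanSpace ℝ (Fin N) =>
                  max (a - b * ‖z‖ ^ 2) 0 ^ (2 * m / (m - 1))) y
                (EuclideanSpace.single i 1)) x (EuclideanSpace.single i 1))
        + c * (max (a - b * ‖x‖ ^ 2) 0 ^ (2 * m / (m - 1))) ^ (1 / m) ≥ 0 :=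
  stmt_5_general N m a b c hm hb hab
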